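/- arXiv:0910.5343 — 2 statements merged into one kernel-verified Lean document; each statement's English description precedes it below -/
import Mathlib

section
/- The transfer operator L = L(0) maps C_ℝ \ {0} into itself, and the diameter of L(C_ℝ \ {0}) with respect to the Hilbert metric of C_ℝ is at most D_ℝ; that is, h_{C_ℝ}(L u, L v) ≤ D_ℝ for all u, v ∈ C_ℝ \ {0}. -/
open Complex

/-- Logarithm on extended nonnegative reals, with values in extended reals. -/
noncomputable def elog (x : ENNReal) : EReal :=
  if x = 0 then ⊥ else if x = ⊤ then ⊤ else (Real.log x.toReal : EReal)

/-- The complex cone generated by a real cone: nonzero multiples of elements u + i v. -/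
def complexCone {V : Type*} [AddCommGroup V] [Module ℂ V] (Cr : Set V) : Set V :=
  {x | x ≠ 0 ∧ ∃ c : ℂ, c ≠ 0 ∧ ∃ u ∈ Cr, ∃ v ∈ Cr, x = c • (u + Complex.I • v)}

/-- The section set of a complex cone. -/
def ECset {V : Type*} [AddCommGroup V] [Module ℂ V] (Cc : Set V) (x y : V) : Set ℂ :=
  {z | z • x - y ∉ Cc}

/-- The projective metric of a complex cone. -/
noncomputable def deltaC {V : Type*} [AddCommGroup V] [Module ℂ V]
    (Cc : Set V) (x y : V) : EReal :=
  elog ((⨆ z ∈ ECset Cc x y, (‖z‖₊ : ENNReal)) / (⨅ z ∈ ECset Cc x y, (‖z‖₊ : ENNReal)))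

/-- The Hilbert metric of a real cone. -/
noncomputable def hilbertMetric {V : Type*} [AddCommGroup V] [Module ℝ V]
    (Cr : Set V) (u v : V) : EReal :=
  elog ((sInf {t : ENNReal | ∃ s : ℝ, 0 < s ∧ t = ENNReal.ofReal s ∧ s • u - v ∈ Cr}) /
        (sSup {t : ENNReal | ∃ s : ℝ, 0 ≤ s ∧ t = ENNReal.ofReal s ∧ v - s • u ∈ Cr}))

/-- Sup norm of a real-valued function. -/
noncomputable def supN {X : Type*} (u : X → ℝ) : ℝ := sSup (Set.range fun x => |u x|)

/-- Best Lipschitz constant of a real-valued function with respect to the distance d. -/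
noncomputable def lipN {X : Type*} (d : X → X → ℝ) (u : X → ℝ) : ℝ :=
  sInf {c : ℝ | 0 ≤ c ∧ ∀ x y, |u x - u y| ≤ c * d x y}

/-- Sup norm of a complex-valued function. -/
noncomputable def supNC {X : Type*} (u : X → ℂ) : ℝ :=
  sSup (Set.range fun x => ‖u x‖)

/-- Best Lipschitz constant of a complex-valued function with respect to the distance d. -/
noncomputable def lipNC {X : Type*} (d : X → X → ℝ) (u : X → ℂ) : ℝ :=
  sInf {c : ℝ | 0 ≤ c ∧ ∀ x y, ‖u x - u y‖ ≤ c * d x y}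

/-- Bounded Lipschitz complex-valued functions. -/
def lipBddC {X : Type*} (d : X → X → ℝ) (u : X → ℂ) : Prop :=
  (∃ c : ℝ, 0 ≤ c ∧ ∀ x y, ‖u x - u y‖ ≤ c * d x y) ∧
    ∃ M : ℝ, ∀ x, ‖u x‖ ≤ M

/-- The real Birkhoff cone of nonnegative bounded Lipschitz functions with
exp(B d(x,y)) u(y) ≥ u(x). -/
def coneR {X : Type*} (d : X → X → ℝ) (B : ℝ) : Set (X → ℝ) :=
  {u | (∃ c : ℝ, 0 ≤ c ∧ ∀ x y, |u x - u y| ≤ c * d x y) ∧ (∃ M : ℝ, ∀ x, |u x| ≤ M) ∧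
    ∀ x y, u x ≤ Real.exp (B * d x y) * u y}

/-- The real Birkhoff cone viewed inside complex-valued functions. -/
def coneRC {X : Type*} (d : X → X → ℝ) (B : ℝ) : Set (X → ℂ) :=
  {w | ∃ u ∈ coneR d B, w = fun x => ((u x : ℝ) : ℂ)}

/-- The (unperturbed) transfer operator on real-valued functions. -/
noncomputable def transferR {X : Type*} {J : Type*} (g : J → X → ℝ) (σb : J → X → X)
    (u : X → ℝ) : X → ℝ :=
  fun x => ∑' j, Real.exp (g j x) * u (σb j x)

/-- The (unperturbed) transfer operator on complex-valued functions. -/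
noncomputable def transferC {X : Type*} {J : Type*} (g : J → X → ℝ) (σb : J → X → X)
    (u : X → ℂ) : X → ℂ :=
  fun x => ∑' j, ((Real.exp (g j x) : ℝ) : ℂ) * u (σb j x)

/-- The perturbed transfer operator L(z). -/
noncomputable def transferZ {X : Type*} {J : Type*} (g : J → X → ℝ) (σb : J → X → X)
    (f : X → ℝ) (z : ℂ) (u : X → ℂ) : X → ℂ :=
  fun x => ∑' j, Complex.exp (((g j x : ℝ) : ℂ) + z * ((f (σb j x) : ℝ) : ℂ)) * u (σb j x)

/-!
`L` maps the cone `C_B` into the narrower cone `C_{B'}`, `B' = G + B/γ = B - 1/γ`: the weights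
`e^{g_j}` distort by at most `e^{G d}` and the branches `σ_j` shrink `d` by `γ⁻¹`. Two positive
elements `U, V` of `C_{B'}` have `V/U` oscillating by at most `e^{2B'}` (as `d ≤ 1`), and for `w` in
`C_{B'}` the quantity `e^{B d(x,y)} w(y) - w(x)` is pinned between `(e^{B d} - e^{B' d}) w(y)` and
`K` times it, `K = (B + B')/(B - B')`, by convexity of `exp`. So `t U - V` and `V - s U` lie in
`C_B` once `K V ≤ t U` and `K s U ≤ V`, which is achievable with `t/s = K² e^{2B'}`; this is
`D_ℝ = 2B' + 2 log K`.
-/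

lemma exp_sub_exp_neg_le_mul_exp_sub_exp {a a' t : ℝ} (ha' : 0 ≤ a') (haa' : a' < a)
    (ht : 0 ≤ t) :
    Real.exp (a * t) - Real.exp (-(a' * t)) ≤
      (a + a') / (a - a') * (Real.exp (a * t) - Real.exp (a' * t)) := by
  rcases ht.eq_or_lt with rfl | ht
  · simp
  -- slopes of the secants of the convex `exp` from `a t`
  have h := convexOn_exp.secant_mono (a := a * t) (x := -(a' * t)) (y := a' * t)
    trivial trivial trivial (by nlinarith) (by nlinarith) (by nlinarith)
  have h1 : 0 < (a + a') * t := by nlinarith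
  have h2 : 0 < (a - a') * t := by nlinarith
  rw [show -(a' * t) - a * t = -((a + a') * t) by ring,
    show a' * t - a * t = -((a - a') * t) by ring, div_neg, div_neg, neg_le_neg_iff, div_le_div_iff₀ h2 h1] at h
  rw [div_mul_eq_mul_div, le_div_iff₀ (by linarith)]
  nlinarith

lemma exp_sub_one_le_mul_exp (s : ℝ) : Real.exp s - 1 ≤ s * Real.exp s := by
  have h := mul_le_mul_of_nonneg_right (Real.add_one_le_exp (-s)) (Real.exp_pos s).le
  rw [← Real.exp_add, neg_add_cancel, Real.exp_zero] at h
  linarith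

lemma elog_le_log {x : ENNReal} {r : ℝ} (hr : 0 < r) (hx : x ≤ ENNReal.ofReal r) :
    elog x ≤ (Real.log r : EReal) := by
  unfold elog
  split_ifs with h0 htop
  · exact bot_le
  · exact absurd htop (hx.trans_lt ENNReal.ofReal_lt_top).ne
  · exact EReal.coe_le_coe_iff.mpr
      (Real.log_le_log (ENNReal.toReal_pos h0 htop) (ENNReal.toReal_le_of_le_ofReal hr.le hx))

lemma hilbertMetric_le_log_div {V : Type*} [AddCommGroup V] [Module ℝ V] {C : Set V} {u v : V}
    {s t : ℝ} (hs : 0 < s) (ht : 0 < t) (hvu : t • u - v ∈ C) (huv : v - s • u ∈ C) :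
    hilbertMetric C u v ≤ (Real.log (t / s) : EReal) := by
  have hinf : sInf {r : ENNReal | ∃ s', 0 < s' ∧ r = ENNReal.ofReal s' ∧ s' • u - v ∈ C}
      ≤ ENNReal.ofReal t := sInf_le ⟨t, ht, rfl, hvu⟩
  have hsup : ENNReal.ofReal s
      ≤ sSup {r : ENNReal | ∃ s', 0 ≤ s' ∧ r = ENNReal.ofReal s' ∧ v - s' • u ∈ C} :=
    le_sSup ⟨s, hs.le, rfl, huv⟩
  have h := ENNReal.div_le_div hinf hsup
  rw [← ENNReal.ofReal_div_of_pos hs] at h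
  exact elog_le_log (div_pos ht hs) h

lemma exists_pos_le_and_le_mul_of_le_mul {X : Type*} [Nonempty X] {r : X → ℝ} {c : ℝ}
    (hr : ∀ x, 0 < r x) (hrc : ∀ x y, r x ≤ c * r y) :
    ∃ m, 0 < m ∧ ∀ x, m ≤ r x ∧ r x ≤ c * m := by
  obtain ⟨x₀⟩ := ‹Nonempty X›
  have hc : 0 < c := pos_of_mul_pos_left ((hr x₀).trans_le (hrc x₀ x₀)) (hr x₀).le
  have hbdd : BddBelow (Set.range r) := ⟨0, by rintro _ ⟨x, rfl⟩; exact (hr x).le⟩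
  have hlow : ∀ x, r x / c ≤ ⨅ y, r y := fun x =>
    le_ciInf fun y => (div_le_iff₀' hc).mpr (hrc x y)
  refine ⟨⨅ y, r y, (div_pos (hr x₀) hc).trans_le (hlow x₀), fun x => ⟨ciInf_le hbdd x, ?_⟩⟩
  exact (div_le_iff₀' hc).mp (hlow x)

section Cone

variable {X : Type*} {d : X → X → ℝ} {A A' : ℝ} {u P Q U V : X → ℝ}

lemma nonneg_of_mem_coneR [Nontrivial X] (hd_pos : ∀ x y, x ≠ y → 0 < d x y)
    (hd_symm : ∀ x y, d x y = d y x) (hA : 0 < A) (hu : u ∈ coneR d A) (y : X) : 0 ≤ u y := by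
  obtain ⟨z, hzy⟩ := exists_ne y
  set E := Real.exp (A * d y z)
  have hE : 1 < E := Real.one_lt_exp_iff.mpr (mul_pos hA (hd_pos y z hzy.symm))
  have h₂ := hu.2.2 z y
  rw [hd_symm z y] at h₂
  have hloop : u y ≤ E * E * u y := by
    simpa only [mul_assoc] using (hu.2.2 y z).trans (mul_le_mul_of_nonneg_left h₂ (by positivity))
  by_contra! hneg
  have hE2 : 1 < E * E := one_lt_mul_of_lt_of_le hE hE.le
  nlinarith [mul_pos (sub_pos.mpr hE2) (neg_pos.mpr hneg)]

lemma pos_of_mem_coneR [Nontrivial X] (hd_pos : ∀ x y, x ≠ y → 0 < d x y)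
    (hd_symm : ∀ x y, d x y = d y x) (hA : 0 < A) (hu : u ∈ coneR d A) (hu₀ : u ≠ 0) (y : X) :
    0 < u y := by
  obtain ⟨x, hx⟩ := Function.ne_iff.mp hu₀
  have hux : 0 < u x := (nonneg_of_mem_coneR hd_pos hd_symm hA hu x).lt_of_ne' hx
  exact pos_of_mul_pos_right (hux.trans_le (hu.2.2 x y)) (Real.exp_pos _).le

lemma smul_mem_coneR {c : ℝ} (hc : 0 ≤ c) (hu : u ∈ coneR d A) : c • u ∈ coneR d A := by
  obtain ⟨⟨L, hL₀, hL⟩, ⟨M, hM⟩, hcone⟩ := hu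
  refine ⟨⟨c * L, mul_nonneg hc hL₀, fun x y => ?_⟩, ⟨c * M, fun x => ?_⟩, fun x y => ?_⟩
  · simpa only [Pi.smul_apply, smul_eq_mul, ← mul_sub, abs_mul, abs_of_nonneg hc, mul_assoc]
      using mul_le_mul_of_nonneg_left (hL x y) hc
  · simpa only [Pi.smul_apply, smul_eq_mul, abs_mul, abs_of_nonneg hc]
      using mul_le_mul_of_nonneg_left (hM x) hc
  · simpa only [Pi.smul_apply, smul_eq_mul, mul_left_comm c]
      using mul_le_mul_of_nonneg_left (hcone x y) hc

lemma mem_coneR_of_le (hd₀ : ∀ x y, 0 ≤ d x y) (hAA' : A' ≤ A) (hu₀ : ∀ x, 0 ≤ u x)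
    (hu : u ∈ coneR d A') : u ∈ coneR d A :=
  ⟨hu.1, hu.2.1, fun x y => (hu.2.2 x y).trans <| mul_le_mul_of_nonneg_right
    (Real.exp_le_exp.mpr (mul_le_mul_of_nonneg_right hAA' (hd₀ x y))) (hu₀ y)⟩

/-- Since `d ≤ 1`, the cone inequality alone makes a bounded nonnegative function Lipschitz. -/
lemma mem_coneR_of_nonneg (hd₀ : ∀ x y, 0 ≤ d x y) (hd_symm : ∀ x y, d x y = d y x)
    (hd_le : ∀ x y, d x y ≤ 1) (hA : 0 ≤ A) {M : ℝ} (hu₀ : ∀ x, 0 ≤ u x) (huM : ∀ x, u x ≤ M)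
    (hu : ∀ x y, u x ≤ Real.exp (A * d x y) * u y) : u ∈ coneR d A := by
  have hsub : ∀ x y, u x - u y ≤ A * Real.exp A * |M| * d x y := fun x y => by
    have hAd : 0 ≤ A * d x y := mul_nonneg hA (hd₀ x y)
    have hexp : Real.exp (A * d x y) ≤ Real.exp A :=
      Real.exp_le_exp.mpr (mul_le_of_le_one_right hA (hd_le x y))
    calc u x - u y ≤ (Real.exp (A * d x y) - 1) * u y := by linarith [hu x y]
      _ ≤ (A * d x y * Real.exp (A * d x y)) * u y :=
        mul_le_mul_of_nonneg_right (exp_sub_one_le_mul_exp _) (hu₀ y)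
      _ ≤ (A * d x y * Real.exp A) * |M| :=
        mul_le_mul (mul_le_mul_of_nonneg_left hexp hAd) ((huM y).trans (le_abs_self M)) (hu₀ y)
          (by positivity)
      _ = A * Real.exp A * |M| * d x y := by ring
  refine ⟨⟨A * Real.exp A * |M|, by positivity, fun x y => abs_sub_le_iff.mpr ⟨hsub x y, ?_⟩⟩,
    ⟨M, fun x => (abs_of_nonneg (hu₀ x)).trans_le (huM x)⟩, hu⟩
  simpa only [hd_symm y x] using hsub y x

/-- For `w` in the smaller cone,
`(e^{A d} - e^{A' d}) w y ≤ e^{A d} w y - w x ≤ K (e^{A d} - e^{A' d}) w y`; hence `K Q ≤ P`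
makes `e^{A d} (P - Q) y - (P - Q) x` nonnegative. -/
lemma sub_mem_coneR (hd₀ : ∀ x y, 0 ≤ d x y) (hd_symm : ∀ x y, d x y = d y x)
    (hd_le : ∀ x y, d x y ≤ 1) (hA' : 0 ≤ A') (hA'A : A' < A) {K : ℝ}
    (hK : (A + A') / (A - A') ≤ K) (hP : P ∈ coneR d A') (hQ : Q ∈ coneR d A')
    (hQ₀ : ∀ x, 0 ≤ Q x) (hQP : ∀ x, K * Q x ≤ P x) : P - Q ∈ coneR d A := by
  have hK₁ : 1 ≤ K := ((one_le_div (by linarith)).mpr (by linarith)).trans hK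
  obtain ⟨M, hM⟩ := hP.2.1
  refine mem_coneR_of_nonneg hd₀ hd_symm hd_le (hA'.trans hA'A.le) (M := M)
    (fun x => sub_nonneg.mpr ((le_mul_of_one_le_left (hQ₀ x) hK₁).trans (hQP x)))
    (fun x => by simp only [Pi.sub_apply]; linarith [hQ₀ x, le_abs_self (P x), hM x])
    fun x y => ?_
  set E := Real.exp (A * d x y)
  set E' := Real.exp (A' * d x y)
  have hE' : 0 ≤ E - E' := sub_nonneg.mpr <|
    Real.exp_le_exp.mpr (mul_le_mul_of_nonneg_right hA'A.le (hd₀ x y))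
  have hQ_lower : Real.exp (-(A' * d x y)) * Q y ≤ Q x := by
    have h := mul_le_mul_of_nonneg_left (hQ.2.2 y x) (Real.exp_pos (-(A' * d x y))).le
    rwa [hd_symm y x, ← mul_assoc, ← Real.exp_add, neg_add_cancel, Real.exp_zero, one_mul] at h
  have hgap : E * Q y - Q x ≤ (E - E') * P y := calc
    E * Q y - Q x ≤ (E - Real.exp (-(A' * d x y))) * Q y := by linarith
    _ ≤ ((A + A') / (A - A') * (E - E')) * Q y := mul_le_mul_of_nonneg_right
      (exp_sub_exp_neg_le_mul_exp_sub_exp hA' hA'A (hd₀ x y)) (hQ₀ y)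
    _ ≤ (K * (E - E')) * Q y :=
      mul_le_mul_of_nonneg_right (mul_le_mul_of_nonneg_right hK hE') (hQ₀ y)
    _ = (E - E') * (K * Q y) := by ring
    _ ≤ (E - E') * P y := mul_le_mul_of_nonneg_left (hQP y) hE'
  simp only [Pi.sub_apply]
  linarith [hP.2.2 x y]

lemma div_le_exp_mul_div (hd_le : ∀ x y, d x y ≤ 1) (hA' : 0 ≤ A') (hU : ∀ x, 0 < U x)
    (hV : ∀ x, 0 ≤ V x)
    (hUc : ∀ x y, U x ≤ Real.exp (A' * d x y) * U y)
    (hVc : ∀ x y, V x ≤ Real.exp (A' * d x y) * V y) (x y : X) :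
    V x / U x ≤ Real.exp (2 * A') * (V y / U y) := by
  have hexp : ∀ x y, Real.exp (A' * d x y) ≤ Real.exp A' := fun x y =>
    Real.exp_le_exp.mpr (mul_le_of_le_one_right hA' (hd_le x y))
  have hVx : V x ≤ Real.exp A' * V y :=
    (hVc x y).trans (mul_le_mul_of_nonneg_right (hexp x y) (hV y))
  have hUy : U y ≤ Real.exp A' * U x :=
    (hUc y x).trans (mul_le_mul_of_nonneg_right (hexp y x) (hU x).le)
  rw [← mul_div_assoc, div_le_div_iff₀ (hU x) (hU y), two_mul, Real.exp_add]
  calc V x * U y ≤ (Real.exp A' * V y) * (Real.exp A' * U x) :=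
        mul_le_mul hVx hUy (hU y).le (mul_nonneg (Real.exp_pos _).le (hV y))
    _ = Real.exp A' * Real.exp A' * V y * U x := by ring

lemma hilbertMetric_coneR_le [Nonempty X] (hd₀ : ∀ x y, 0 ≤ d x y)
    (hd_symm : ∀ x y, d x y = d y x) (hd_le : ∀ x y, d x y ≤ 1) (hA' : 0 ≤ A') (hA'A : A' < A)
    (hU : U ∈ coneR d A') (hV : V ∈ coneR d A') (hU₀ : ∀ x, 0 < U x) (hV₀ : ∀ x, 0 < V x) :
    hilbertMetric (coneR d A) U V ≤
      ((2 * A' + 2 * Real.log ((A + A') / (A - A')) : ℝ) : EReal) := by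
  set K := (A + A') / (A - A')
  have hK : 0 < K := div_pos (by linarith) (by linarith)
  obtain ⟨m, hm, hmV⟩ := exists_pos_le_and_le_mul_of_le_mul (fun x => div_pos (hV₀ x) (hU₀ x))
    (div_le_exp_mul_div hd_le hA' hU₀ (fun x => (hV₀ x).le) hU.2.2 hV.2.2)
  have hlow : ∀ x, m * U x ≤ V x := fun x => (le_div_iff₀ (hU₀ x)).mp (hmV x).1
  have hup : ∀ x, V x ≤ Real.exp (2 * A') * m * U x := fun x => (div_le_iff₀ (hU₀ x)).mp (hmV x).2
  have hupper := sub_mem_coneR hd₀ hd_symm hd_le hA' hA'A (K := K) le_rfl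
    (smul_mem_coneR (c := K * Real.exp (2 * A') * m) (by positivity) hU) hV (fun x => (hV₀ x).le)
    (fun x => by
      simpa only [Pi.smul_apply, smul_eq_mul, mul_assoc]
        using mul_le_mul_of_nonneg_left (hup x) hK.le)
  have hlower := sub_mem_coneR hd₀ hd_symm hd_le hA' hA'A (K := K) le_rfl hV
    (smul_mem_coneR (c := m / K) (by positivity) hU)
    (fun x => mul_nonneg (div_pos hm hK).le (hU₀ x).le)
    (fun x => by
      simpa only [Pi.smul_apply, smul_eq_mul, ← mul_assoc, mul_div_cancel₀ m hK.ne'] using hlow x)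
  have hlog : Real.log (K * Real.exp (2 * A') * m / (m / K)) = 2 * A' + 2 * Real.log K := by
    rw [show K * Real.exp (2 * A') * m / (m / K) = K ^ 2 * Real.exp (2 * A') by field_simp,
      Real.log_mul (by positivity) (Real.exp_pos _).ne', Real.log_exp, Real.log_pow]
    ring
  rw [← hlog]
  exact hilbertMetric_le_log_div (div_pos hm hK) (by positivity) hupper hlower

end Cone

section Transfer

variable {X J : Type*} {d : X → X → ℝ} {σb : J → X → X} {g : J → X → ℝ} {u : X → ℝ} {M : ℝ}
  {x : X}

lemma summable_exp_mul_comp (hsum : Summable fun j => Real.exp (g j x))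
    (hM : ∀ y, |u y| ≤ M) : Summable fun j => Real.exp (g j x) * u (σb j x) :=
  (hsum.mul_right M).of_norm_bounded fun j => by
    rw [norm_mul, Real.norm_eq_abs, Real.abs_exp]
    exact mul_le_mul_of_nonneg_left (hM _) (Real.exp_pos _).le

lemma transferR_le {S : ℝ} (hsum : Summable fun j => Real.exp (g j x))
    (hS : ∑' j, Real.exp (g j x) ≤ S) (hM : ∀ y, |u y| ≤ M) : transferR g σb u x ≤ S * M := by
  have hM₀ : 0 ≤ M := (abs_nonneg _).trans (hM x)
  calc transferR g σb u x ≤ ∑' j, Real.exp (g j x) * M :=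
        (summable_exp_mul_comp hsum hM).tsum_le_tsum
          (fun j => mul_le_mul_of_nonneg_left (le_of_abs_le (hM _)) (Real.exp_pos _).le)
          (hsum.mul_right M)
    _ ≤ S * M := by rw [tsum_mul_right]; exact mul_le_mul_of_nonneg_right hS hM₀

lemma transferR_pos [Nonempty J] (hsum : Summable fun j => Real.exp (g j x))
    (hM : ∀ y, |u y| ≤ M) (hu : ∀ y, 0 < u y) : 0 < transferR g σb u x := by
  obtain ⟨j₀⟩ := ‹Nonempty J›
  calc 0 < Real.exp (g j₀ x) * u (σb j₀ x) := mul_pos (Real.exp_pos _) (hu _)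
    _ ≤ transferR g σb u x := (summable_exp_mul_comp hsum hM).le_tsum j₀
      fun j _ => mul_nonneg (Real.exp_pos _).le (hu _).le

lemma transferR_le_exp_mul {γ G B : ℝ} (hB : 0 ≤ B)
    (hA1 : ∀ j x y, d (σb j x) (σb j y) ≤ γ⁻¹ * d x y)
    (hA2 : ∀ j x y, |g j x - g j y| ≤ G * d x y)
    (hsum : ∀ x, Summable fun j => Real.exp (g j x)) (hM : ∀ y, |u y| ≤ M)
    (hu₀ : ∀ x, 0 ≤ u x) (hu : ∀ x y, u x ≤ Real.exp (B * d x y) * u y) (x y : X) :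
    transferR g σb u x ≤ Real.exp ((G + B / γ) * d x y) * transferR g σb u y := by
  have hterm : ∀ j, Real.exp (g j x) * u (σb j x) ≤
      Real.exp ((G + B / γ) * d x y) * (Real.exp (g j y) * u (σb j y)) := fun j => by
    have hg : Real.exp (g j x) ≤ Real.exp (G * d x y) * Real.exp (g j y) := by
      rw [← Real.exp_add]
      exact Real.exp_le_exp.mpr (by linarith [le_of_abs_le (hA2 j x y)])
    have hσ : u (σb j x) ≤ Real.exp (B / γ * d x y) * u (σb j y) :=
      (hu _ _).trans <| mul_le_mul_of_nonneg_right (Real.exp_le_exp.mpr <| by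
        rw [div_eq_mul_inv, mul_assoc]; exact mul_le_mul_of_nonneg_left (hA1 j x y) hB) (hu₀ _)
    calc Real.exp (g j x) * u (σb j x)
        ≤ (Real.exp (G * d x y) * Real.exp (g j y)) * (Real.exp (B / γ * d x y) * u (σb j y)) :=
          mul_le_mul hg hσ (hu₀ _) (by positivity)
      _ = Real.exp ((G + B / γ) * d x y) * (Real.exp (g j y) * u (σb j y)) := by
          rw [add_mul, Real.exp_add]; ring
  rw [transferR, transferR, ← tsum_mul_left]
  exact (summable_exp_mul_comp (hsum x) hM).tsum_le_tsum hterm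
    ((summable_exp_mul_comp (hsum y) hM).mul_left _)

lemma transferR_mem_coneR {γ G B S : ℝ} (hγ : 0 < γ) (hG : 0 ≤ G) (hB : 0 ≤ B)
    (hd₀ : ∀ x y, 0 ≤ d x y) (hd_symm : ∀ x y, d x y = d y x) (hd_le : ∀ x y, d x y ≤ 1)
    (hA1 : ∀ j x y, d (σb j x) (σb j y) ≤ γ⁻¹ * d x y)
    (hA2 : ∀ j x y, |g j x - g j y| ≤ G * d x y)
    (hsum : ∀ x, Summable fun j => Real.exp (g j x)) (hS : ∀ x, ∑' j, Real.exp (g j x) ≤ S)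
    (hu : u ∈ coneR d B) (hu₀ : ∀ x, 0 ≤ u x) : transferR g σb u ∈ coneR d (G + B / γ) := by
  obtain ⟨M, hM⟩ := hu.2.1
  exact mem_coneR_of_nonneg hd₀ hd_symm hd_le (by positivity)
    (fun x => tsum_nonneg fun j => mul_nonneg (Real.exp_pos _).le (hu₀ _))
    (fun x => transferR_le (hsum x) (hS x) hM)
    (transferR_le_exp_mul hB hA1 hA2 hsum hM hu₀ hu.2.2)

end Transfer

theorem transfer_real_cone_contraction_general
    {J : Type*} [Nonempty J]
    (d : ↥(Set.Icc (0:ℝ) 1) → ↥(Set.Icc (0:ℝ) 1) → ℝ)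
    (hd_eq : ∀ x y, d x y = 0 ↔ x = y)
    (hd_symm : ∀ x y, d x y = d y x)
    (hd_tri : ∀ x y z, d x z ≤ d x y + d y z)
    (hd_le : ∀ x y, d x y ≤ 1)
    (σb : J → ↥(Set.Icc (0:ℝ) 1) → ↥(Set.Icc (0:ℝ) 1)) (g : J → ↥(Set.Icc (0:ℝ) 1) → ℝ)
    (γ G : ℝ) (hγ : 1 < γ) (hG : 0 < G)
    (hA1 : ∀ j x y, d (σb j x) (σb j y) ≤ γ⁻¹ * d x y)
    (hA2 : ∀ j x y, |g j x - g j y| ≤ G * d x y)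
    (hA3 : ∃ M : ℝ, ∀ x, Summable (fun j => Real.exp (g j x)) ∧
      (∑' j, Real.exp (g j x)) ≤ M)
    (B Dr : ℝ) (hB : B = (γ * G + 1) / (γ - 1))
    (hDr : Dr = 2 * (γ ^ 2 * G + 1) / (γ * (γ - 1)) +
      2 * Real.log ((2 * γ ^ 2 * G + γ + 1) / (γ - 1))) :
    (∀ u ∈ coneR d B, u ≠ 0 → transferR g σb u ∈ coneR d B ∧ transferR g σb u ≠ 0) ∧
    ∀ u ∈ coneR d B, u ≠ 0 → ∀ v ∈ coneR d B, v ≠ 0 →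
      hilbertMetric (coneR d B) (transferR g σb u) (transferR g σb v) ≤ (Dr : EReal) := by
  obtain ⟨S, hS⟩ := hA3
  have hd₀ : ∀ x y, 0 ≤ d x y := fun x y => by
    linarith [hd_tri x y x, (hd_eq x x).mpr rfl, hd_symm x y]
  have hd_pos : ∀ x y, x ≠ y → 0 < d x y := fun x y hxy =>
    (hd₀ x y).lt_of_ne' fun h => hxy ((hd_eq x y).mp h)
  have hγ₀ : 0 < γ := by linarith
  have hγ₁ : 0 < γ - 1 := by linarith
  have hB₀ : 0 < B := by rw [hB]; positivity
  set B' := G + B / γ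
  have hB'B : B' < B := by
    rw [show B' = B - 1 / γ by simp only [B', hB]; field_simp; ring]
    linarith [one_div_pos.mpr hγ₀]
  have hDr' : Dr = 2 * B' + 2 * Real.log ((B + B') / (B - B')) := by
    simp only [B', hDr, hB]; field_simp; ring_nf
  have hL : ∀ u ∈ coneR d B, u ≠ 0 →
      transferR g σb u ∈ coneR d B' ∧ ∀ x, 0 < transferR g σb u x := by
    intro u hu hu₀
    obtain ⟨M, hM⟩ := hu.2.1
    exact ⟨transferR_mem_coneR hγ₀ hG.le hB₀.le hd₀ hd_symm hd_le hA1 hA2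
      (fun x => (hS x).1) (fun x => (hS x).2) hu (nonneg_of_mem_coneR hd_pos hd_symm hB₀ hu),
      fun x => transferR_pos (hS x).1 hM (pos_of_mem_coneR hd_pos hd_symm hB₀ hu hu₀)⟩
  refine ⟨fun u hu hu₀ => ⟨?_, ?_⟩, fun u hu hu₀ v hv hv₀ => ?_⟩
  · exact mem_coneR_of_le hd₀ hB'B.le (fun x => ((hL u hu hu₀).2 x).le) (hL u hu hu₀).1
  · exact fun h => ((hL u hu hu₀).2 ⟨0, by norm_num⟩).ne' (congrFun h _)
  · rw [hDr']
    exact hilbertMetric_coneR_le hd₀ hd_symm hd_le (by positivity) hB'B (hL u hu hu₀).1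
      (hL v hv hv₀).1 (hL u hu hu₀).2 (hL v hv hv₀).2

/-- Lemma 5.1(1): the transfer operator maps the real cone minus zero into
itself, and the Hilbert diameter of the image is at most D_R. -/
theorem transfer_real_cone_contraction
    {J : Type*} [Countable J] [Nonempty J]
    (d : ↥(Set.Icc (0:ℝ) 1) → ↥(Set.Icc (0:ℝ) 1) → ℝ)
    (hd_eq : ∀ x y, d x y = 0 ↔ x = y)
    (hd_symm : ∀ x y, d x y = d y x)
    (hd_tri : ∀ x y z, d x z ≤ d x y + d y z)
    (hd_le : ∀ x y, d x y ≤ 1)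
    (hd_compat : ∀ (x : ↥(Set.Icc (0:ℝ) 1)) (ε : ℝ), 0 < ε →
      (∃ δ > 0, ∀ y, dist x y < δ → d x y < ε) ∧
      (∃ δ > 0, ∀ y, d x y < δ → dist x y < ε))
    (σb : J → ↥(Set.Icc (0:ℝ) 1) → ↥(Set.Icc (0:ℝ) 1)) (g : J → ↥(Set.Icc (0:ℝ) 1) → ℝ)
    (γ G : ℝ) (hγ : 1 < γ) (hG : 0 < G)
    (hA1 : ∀ j x y, d (σb j x) (σb j y) ≤ γ⁻¹ * d x y)
    (hA2 : ∀ j x y, |g j x - g j y| ≤ G * d x y)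
    (hA3 : ∃ M : ℝ, ∀ x, Summable (fun j => Real.exp (g j x)) ∧
      (∑' j, Real.exp (g j x)) ≤ M)
    (f : ↥(Set.Icc (0:ℝ) 1) → ℝ)
    (hfLip : ∃ c : ℝ, 0 ≤ c ∧ ∀ x y, |f x - f y| ≤ c * d x y)
    (hfBdd : ∃ M : ℝ, ∀ x, |f x| ≤ M)
    (B Dr : ℝ) (hB : B = (γ * G + 1) / (γ - 1))
    (hDr : Dr = 2 * (γ ^ 2 * G + 1) / (γ * (γ - 1)) +
      2 * Real.log ((2 * γ ^ 2 * G + γ + 1) / (γ - 1))) :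
    (∀ u ∈ coneR d B, u ≠ 0 → transferR g σb u ∈ coneR d B ∧ transferR g σb u ≠ 0) ∧
    ∀ u ∈ coneR d B, u ≠ 0 → ∀ v ∈ coneR d B, v ≠ 0 →
      hilbertMetric (coneR d B) (transferR g σb u) (transferR g σb v) ≤ (Dr : EReal) :=
  transfer_real_cone_contraction_general d hd_eq hd_symm hd_tri hd_le σb g γ G hγ hG hA1 hA2 hA3 B
    Dr hB hDr
end

section
/- Suppose in addition that λ₀ > 0 and h₀ : X → ℝ is a bounded Lipschitz function with inf_X h₀ > 0 and L(0)h₀ = λ₀·h₀. Let z ∈ ℂ, and let h : X → ℂ be a bounded function with h not identically 0 such that L(z)h = λ·h for some λ ∈ ℂ. Then |λ| ≤ λ₀·exp(|Re(z)|·‖f‖∞). -/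
open Complex

/-!
Put `s = sup ‖h‖ / h₀`, finite because `h` is bounded and `h₀` is bounded below, and positive
because `h ≠ 0`. Then `‖h‖ ≤ s h₀`, and since `|e^{g + z f}| ≤ e^{g} e^{|Re z| ‖f‖∞}`, the eigenvalue
equations give `|λ| ‖h‖ ≤ e^{|Re z| ‖f‖∞} s L(0)h₀ = λ₀ e^{|Re z| ‖f‖∞} s h₀`.
Taking the supremum of `|λ| ‖h‖ / h₀` yields `|λ| s ≤ λ₀ e^{|Re z| ‖f‖∞} s`.
-/

section SupNorm

variable {X : Type*}

theorem abs_le_supN {u : X → ℝ} (hu : ∃ M, ∀ x, |u x| ≤ M) (x : X) : |u x| ≤ supN u := by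
  obtain ⟨M, hM⟩ := hu
  exact le_csSup ⟨M, by rintro _ ⟨y, rfl⟩; exact hM y⟩ ⟨x, rfl⟩

theorem mul_le_abs_mul_supN {u : X → ℝ} (hu : ∃ M, ∀ x, |u x| ≤ M) (a : ℝ) (x : X) :
    a * u x ≤ |a| * supN u :=
  calc a * u x ≤ |a| * |u x| := (le_abs_self _).trans_eq (abs_mul _ _)
    _ ≤ |a| * supN u := mul_le_mul_of_nonneg_left (abs_le_supN hu x) (abs_nonneg a)

end SupNorm

theorem le_of_forall_mul_le_mul_iSup {X : Type*} {R : X → ℝ} {a b : ℝ}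
    (hR : BddAbove (Set.range R)) (hpos : ∃ x, 0 < R x) (ha : 0 ≤ a)
    (h : ∀ x, a * R x ≤ b * ⨆ x, R x) : a ≤ b := by
  obtain ⟨x₀, hx₀⟩ := hpos
  have : Nonempty X := ⟨x₀⟩
  have hs : 0 < ⨆ x, R x := hx₀.trans_le (le_ciSup hR x₀)
  refine le_of_mul_le_mul_right ?_ hs
  rw [Real.mul_iSup_of_nonneg ha]
  exact ciSup_le h

section TransferOperator

variable {X J : Type*} (g : J → X → ℝ) (σb : J → X → X)

theorem summable_of_transferR_ne_zero {v : X → ℝ} {x : X} (hx : transferR g σb v x ≠ 0) :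
    Summable fun j => Real.exp (g j x) * v (σb j x) := by
  by_contra hns
  exact hx (tsum_eq_zero_of_not_summable hns)

theorem norm_transferZ_le (f : X → ℝ) (z : ℂ) {K s : ℝ} (hK : ∀ y, z.re * f y ≤ K)
    {u : X → ℂ} {v : X → ℝ} (huv : ∀ y, ‖u y‖ ≤ s * v y) (x : X)
    (hv : Summable fun j => Real.exp (g j x) * v (σb j x)) :
    ‖transferZ g σb f z u x‖ ≤ Real.exp K * s * transferR g σb v x := by
  refine tsum_of_norm_bounded (hv.hasSum.mul_left (Real.exp K * s)) fun j => ?_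
  have hre : (((g j x : ℝ) : ℂ) + z * ((f (σb j x) : ℝ) : ℂ)).re =
      g j x + z.re * f (σb j x) := by
    simp
  rw [norm_mul, Complex.norm_exp, hre, Real.exp_add]
  calc Real.exp (g j x) * Real.exp (z.re * f (σb j x)) * ‖u (σb j x)‖
      ≤ Real.exp (g j x) * Real.exp K * (s * v (σb j x)) := by
        gcongr
        · exact hK _
        · exact huv _
    _ = Real.exp K * s * (Real.exp (g j x) * v (σb j x)) := by ring

end TransferOperator

theorem perturbed_eigenvalue_bound_general
    {J : Type*}
    (σb : J → ↥(Set.Icc (0:ℝ) 1) → ↥(Set.Icc (0:ℝ) 1)) (g : J → ↥(Set.Icc (0:ℝ) 1) → ℝ)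
    (f : ↥(Set.Icc (0:ℝ) 1) → ℝ)
    (hfBdd : ∃ M : ℝ, ∀ x, |f x| ≤ M)
    (lam0 : ℝ) (hlam0 : 0 < lam0)
    (h0 : ↥(Set.Icc (0:ℝ) 1) → ℝ)
    (hh0pos : ∃ c : ℝ, 0 < c ∧ ∀ x, c ≤ h0 x)
    (hh0eig : ∀ x, transferR g σb h0 x = lam0 * h0 x)
    (z : ℂ) (lam : ℂ) (h : ↥(Set.Icc (0:ℝ) 1) → ℂ)
    (hhB : ∃ M : ℝ, ∀ x, ‖h x‖ ≤ M) (hh0' : h ≠ 0)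
    (heig : ∀ x, transferZ g σb f z h x = lam * h x) :
    ‖lam‖ ≤ lam0 * Real.exp (|z.re| * supN f) := by
  obtain ⟨M, hM⟩ := hhB
  obtain ⟨c, hc, hch0⟩ := hh0pos
  have hh0_pos : ∀ x, 0 < h0 x := fun x => hc.trans_le (hch0 x)
  set R := fun x => ‖h x‖ / h0 x
  have hR_bdd : BddAbove (Set.range R) := ⟨M / c, by
    rintro _ ⟨x, rfl⟩
    exact div_le_div₀ ((norm_nonneg _).trans (hM x)) (hM x) hc (hch0 x)⟩
  have hR_pos : ∃ x, 0 < R x := by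
    obtain ⟨x, hx⟩ := Function.ne_iff.mp hh0'
    exact ⟨x, div_pos (norm_pos_iff.mpr hx) (hh0_pos x)⟩
  have hh_le : ∀ y, ‖h y‖ ≤ (⨆ y, R y) * h0 y := fun y =>
    (div_le_iff₀ (hh0_pos y)).mp (le_ciSup hR_bdd y)
  refine le_of_forall_mul_le_mul_iSup hR_bdd hR_pos (norm_nonneg lam) fun x => ?_
  -- a divergent `∑'` would be `0`, not `λ₀ h₀ x > 0`
  have hsum := summable_of_transferR_ne_zero g σb
    ((hh0eig x).trans_ne (mul_pos hlam0 (hh0_pos x)).ne')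
  rw [← mul_div_assoc, div_le_iff₀ (hh0_pos x), ← norm_mul, ← heig x]
  calc ‖transferZ g σb f z h x‖
      ≤ Real.exp (|z.re| * supN f) * (⨆ y, R y) * transferR g σb h0 x :=
        norm_transferZ_le g σb f z (mul_le_abs_mul_supN hfBdd z.re) hh_le x hsum
    _ = lam0 * Real.exp (|z.re| * supN f) * (⨆ y, R y) * h0 x := by rw [hh0eig x]; ring

/-- Lemma 6.6: any eigenvalue of the perturbed transfer operator L(z) on
bounded functions is bounded by lambda_0 exp(|Re z| sup|f|), where lambda_0 is the leading
eigenvalue of L(0) with positive eigenfunction h_0. -/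
theorem perturbed_eigenvalue_bound
    {J : Type*} [Countable J] [Nonempty J]
    (d : ↥(Set.Icc (0:ℝ) 1) → ↥(Set.Icc (0:ℝ) 1) → ℝ)
    (hd_eq : ∀ x y, d x y = 0 ↔ x = y)
    (hd_symm : ∀ x y, d x y = d y x)
    (hd_tri : ∀ x y z, d x z ≤ d x y + d y z)
    (hd_le : ∀ x y, d x y ≤ 1)
    (hd_compat : ∀ (x : ↥(Set.Icc (0:ℝ) 1)) (ε : ℝ), 0 < ε →
      (∃ δ > 0, ∀ y, dist x y < δ → d x y < ε) ∧
      (∃ δ > 0, ∀ y, d x y < δ → dist x y < ε))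
    (σb : J → ↥(Set.Icc (0:ℝ) 1) → ↥(Set.Icc (0:ℝ) 1)) (g : J → ↥(Set.Icc (0:ℝ) 1) → ℝ)
    (γ G : ℝ) (hγ : 1 < γ) (hG : 0 < G)
    (hA1 : ∀ j x y, d (σb j x) (σb j y) ≤ γ⁻¹ * d x y)
    (hA2 : ∀ j x y, |g j x - g j y| ≤ G * d x y)
    (hA3 : ∃ M : ℝ, ∀ x, Summable (fun j => Real.exp (g j x)) ∧
      (∑' j, Real.exp (g j x)) ≤ M)
    (f : ↥(Set.Icc (0:ℝ) 1) → ℝ)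
    (hfLip : ∃ c : ℝ, 0 ≤ c ∧ ∀ x y, |f x - f y| ≤ c * d x y)
    (hfBdd : ∃ M : ℝ, ∀ x, |f x| ≤ M)
    (lam0 : ℝ) (hlam0 : 0 < lam0)
    (h0 : ↥(Set.Icc (0:ℝ) 1) → ℝ)
    (hh0Lip : ∃ c : ℝ, 0 ≤ c ∧ ∀ x y, |h0 x - h0 y| ≤ c * d x y)
    (hh0pos : ∃ c : ℝ, 0 < c ∧ ∀ x, c ≤ h0 x)
    (hh0eig : ∀ x, transferR g σb h0 x = lam0 * h0 x)
    (z : ℂ) (lam : ℂ) (h : ↥(Set.Icc (0:ℝ) 1) → ℂ)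
    (hhB : ∃ M : ℝ, ∀ x, ‖h x‖ ≤ M) (hh0' : h ≠ 0)
    (heig : ∀ x, transferZ g σb f z h x = lam * h x) :
    ‖lam‖ ≤ lam0 * Real.exp (|z.re| * supN f) :=
  perturbed_eigenvalue_bound_general σb g f hfBdd lam0 hlam0 h0 hh0pos hh0eig z lam h hhB hh0' heig
end
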